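/- Let A be a pseudo-BCI-algebra and define x · y = (x → 1) ⇝ y and x ⋆ y = (y ⇝ 1) → x. Then for all x, y, z ∈ A: (1) 1 · x = x = x ⋆ 1; (2) x · (x → 1) = 1 = (x ⇝ 1) ⋆ x; (3) x · (y ⋆ z) = (x · y) ⋆ z. -/
import Mathlib


class PseudoBCI (A : Type*) where
  ar : A → A → A
  sq : A → A → A
  one : A
  ax1 : ∀ x y z : A, sq (ar x y) (sq (ar y z) (ar x z)) = one
  ax2 : ∀ x y z : A, ar (sq x y) (ar (sq y z) (sq x z)) = one
  ax3 : ∀ x : A, ar one x = x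
  ax4 : ∀ x : A, sq one x = x
  ax5 : ∀ x y : A, ar x y = one → ar y x = one → x = y

open PseudoBCI

section lemmas
variable {A : Type*} [PseudoBCI A]

lemma sq_self (x : A) : sq x x = one := by
  have h := ax1 (one : A) one x
  rwa [ax3, ax3, ax4] at h

lemma ar_self (x : A) : ar x x = one := by
  have h := ax2 (one : A) one x
  rwa [ax4, ax4, ax3] at h

lemma of_sq {x y : A} (h : sq x y = one) : ar x y = one := by
  have h2 := ax2 (one : A) x y
  rwa [ax4, ax4, h, ax3] at h2

lemma of_ar {x y : A} (h : ar x y = one) : sq x y = one := by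
  have h2 := ax1 (one : A) x y
  rwa [ax3, ax3, h, ax4] at h2

lemma trans_ar {x y z : A} (h1 : ar x y = one) (h2 : ar y z = one) :
    ar x z = one := by
  have h := ax1 x y z
  rwa [h1, h2, ax4, ax4] at h

-- antitone in first argument of →
lemma anti_ar {x y : A} (h : ar x y = one) (z : A) :
    sq (ar y z) (ar x z) = one := by
  have h2 := ax1 x y z
  rwa [h, ax4] at h2

-- antitone in first argument of ⇝
lemma anti_sq {x y : A} (h : sq x y = one) (z : A) :
    ar (sq y z) (sq x z) = one := by
  have h2 := ax2 x y z
  rwa [h, ax3] at h2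

lemma L1 (y z : A) : sq y (sq (ar y z) z) = one := by
  have h := ax1 (one : A) y z
  rwa [ax3, ax3] at h

lemma L2 (y z : A) : ar y (ar (sq y z) z) = one := by
  have h := ax2 (one : A) y z
  rwa [ax4, ax4] at h

-- C1 : x→(y⇝z) ≤ y⇝(x→z)
lemma C1 (x y z : A) : ar (ar x (sq y z)) (sq y (ar x z)) = one := by
  have s1 : sq (ar x (sq y z)) (sq (ar (sq y z) z) (ar x z)) = one := ax1 x (sq y z) z
  have s2 : ar (sq (ar (sq y z) z) (ar x z)) (sq y (ar x z)) = one :=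
    anti_sq (of_ar (L2 y z)) (ar x z)
  exact trans_ar (of_sq s1) s2

-- C2 : x⇝(y→z) ≤ y→(x⇝z)
lemma C2 (x y z : A) : ar (sq x (ar y z)) (ar y (sq x z)) = one := by
  have s1 : ar (sq x (ar y z)) (ar (sq (ar y z) z) (sq x z)) = one := ax2 x (ar y z) z
  have s2 : sq (ar (sq (ar y z) z) (sq x z)) (ar y (sq x z)) = one :=
    anti_ar (of_sq (L1 y z)) (sq x z)
  exact trans_ar s1 (of_sq s2)

lemma exchange (x y z : A) : ar x (sq y z) = sq y (ar x z) :=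
  ax5 _ _ (C1 x y z) (C2 y x z)

end lemmas

theorem stmt14 {A : Type*} [PseudoBCI A] (x y z : A) :
    (sq (ar (one : A) one) x = x ∧ ar (sq (one : A) one) x = x) ∧
    (sq (ar x one) (ar x one) = (one : A) ∧ ar (sq x one) (sq x one) = (one : A)) ∧
    sq (ar x one) (ar (sq z one) y) = ar (sq z one) (sq (ar x one) y) := by
  refine ⟨⟨?_, ?_⟩, ⟨sq_self _, ar_self _⟩, ?_⟩
  · rw [ax3, ax4]
  · rw [ax4, ax3]
  · exact (exchange (sq z one) (ar x one) y).symm
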